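/- arXiv:2106.03531 — 4 statements merged into one kernel-verified Lean document; each statement's English description precedes it below -/
import Mathlib

section
/- Every (3,3r)-biregular bipartite graph with r ≥ 2 satisfies θ_int(G) ≤ 2. -/
open SimpleGraph

variable {V : Type*}

/-- A proper edge coloring: distinct edges sharing a vertex get distinct colors. -/
def IsProperEdgeColoring (G : SimpleGraph V) (c : Sym2 V → ℕ) : Prop :=
  ∀ e₁ ∈ G.edgeSet, ∀ e₂ ∈ G.edgeSet, e₁ ≠ e₂ → (∃ v, v ∈ e₁ ∧ v ∈ e₂) → c e₁ ≠ c e₂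

/-- The set of colors appearing on edges incident to `v`. -/
def colorsAt (G : SimpleGraph V) (c : Sym2 V → ℕ) (v : V) : Set ℕ :=
  {n | ∃ e ∈ G.edgeSet, v ∈ e ∧ c e = n}

/-- An interval coloring: a proper edge coloring with positive integer colors such that
the set of colors at each vertex is an interval of integers. -/
def IsIntervalColoring (G : SimpleGraph V) (c : Sym2 V → ℕ) : Prop :=
  IsProperEdgeColoring G c ∧ (∀ e ∈ G.edgeSet, 1 ≤ c e) ∧
    ∀ v, ∀ a ∈ colorsAt G c v, ∀ b ∈ colorsAt G c v, ∀ k, a ≤ k → k ≤ b →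
      k ∈ colorsAt G c v

def IntervalColorable (G : SimpleGraph V) : Prop :=
  ∃ c, IsIntervalColoring G c

/-- The chromatic index: least `t` admitting a proper edge coloring with colors in `{1,…,t}`. -/
noncomputable def chromIndex (G : SimpleGraph V) : ℕ :=
  sInf {t | ∃ c, IsProperEdgeColoring G c ∧ ∀ e ∈ G.edgeSet, c e ∈ Finset.Icc 1 t}

/-- A decomposition of `G` into `k` edge-disjoint interval colorable subgraphs. -/
def IntervalDecomposition (G : SimpleGraph V) (k : ℕ) : Prop :=
  ∃ H : Fin k → SimpleGraph V, (∀ i, H i ≤ G) ∧ (∀ i, IntervalColorable (H i)) ∧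
    ∀ e ∈ G.edgeSet, ∃! i, e ∈ (H i).edgeSet

/-- The interval coloring thickness of `G`. -/
noncomputable def intervalThickness (G : SimpleGraph V) : ℕ :=
  sInf {k | IntervalDecomposition G k}

/-!
Split the `3r` neighbours of every `y ∈ Y` into `r` blocks of three. This makes `G` a 3-regular
bipartite multigraph between `X` and the blocks, and König's theorem colours its edges with three
colours: every `x` gets exactly one neighbour `ν x i` of each colour `i`, and every `y` is reached
by exactly `r` edges of each colour. The colour-0 edges form a forest of stars centred in `Y`. The
colour-1 and colour-2 edges, read as arcs `ν x 1 → ν x 2`, form an `r`-regular bipartite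
multigraph on `Y`, which König's theorem colours by some `c : X → [0, r)`. Whenever each `x` has
`m` ports and `c` takes every value in `[0, r)` exactly once among the `x` whose port `i` leads to
a given `y`, giving port `i` of `x` the colour `m * c x + i + 1` is an interval colouring: the
colours at `x` are consecutive, and every colour in `[1, m * r]` occurs exactly once at each `y`.
-/

open Finset Function

section Konig

variable {E A B : Type*}

theorem existsUnique_extend_coloring [DecidableEq E] {f : E → A} {s M : Finset E} (hMs : M ⊆ s)
    {d : ℕ} (hM : ∀ a, ∃! e, e ∈ M ∧ f e = a) {c : E → ℕ} (hc : ∀ e ∈ s \ M, c e < d)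
    (hcf : ∀ a, ∀ i < d, ∃! e, e ∈ s \ M ∧ f e = a ∧ c e = i) :
    ∀ a, ∀ i < d + 1, ∃! e, e ∈ s ∧ f e = a ∧ (if e ∈ M then d else c e) = i := by
  intro a i hi
  rcases Nat.lt_succ_iff_lt_or_eq.1 hi with hi | rfl
  · refine (existsUnique_congr fun e => ?_).2 (hcf a i hi)
    by_cases heM : e ∈ M
    · simp only [heM, if_true, mem_sdiff, not_true_eq_false, and_false, false_and, iff_false]
      omega
    · simp only [heM, if_false, mem_sdiff, not_false_eq_true, and_true]
  · refine (existsUnique_congr fun e => ?_).2 (hM a)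
    by_cases heM : e ∈ M
    · simp only [heM, if_true, hMs heM, true_and, and_true]
    · simp only [heM, if_false, false_and, iff_false, not_and]
      exact fun hes _ => (hc e (mem_sdiff.2 ⟨hes, heM⟩)).ne

variable [DecidableEq A]

theorem card_filter_mem_eq_mul {f : E → A} {s : Finset E} {d : ℕ}
    (hf : ∀ a, #{e ∈ s | f e = a} = d) (S : Finset A) : #{e ∈ s | f e ∈ S} = #S * d := by
  rw [card_eq_sum_card_fiberwise (s := {e ∈ s | f e ∈ S}) (t := S) fun e he => (mem_filter.1 he).2,
    ← smul_eq_mul, ← sum_const]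
  refine sum_congr rfl fun a ha => ?_
  rw [filter_filter, ← hf a]
  congr 1
  exact filter_congr fun e _ => ⟨And.right, fun h => ⟨h ▸ ha, h⟩⟩

variable [DecidableEq E]

theorem card_filter_sdiff_of_existsUnique {f : E → A} {s M : Finset E} (hMs : M ⊆ s) {a : A}
    (hM : ∃! e, e ∈ M ∧ f e = a) : #{e ∈ s \ M | f e = a} + 1 = #{e ∈ s | f e = a} := by
  have hsub : {e ∈ M | f e = a} ⊆ {e ∈ s | f e = a} := filter_subset_filter _ hMs
  have hone : #{e ∈ M | f e = a} = 1 := card_eq_one_iff_existsUnique.2 (by simpa using hM)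
  rw [← hone, ← card_sdiff_add_card_eq_card hsub]
  congr 2
  ext e
  simp only [mem_filter, mem_sdiff]
  tauto

variable [Fintype A] [Fintype B] [DecidableEq B] {t : E → A} {h : E → B}

theorem exists_perfectMatching_of_regular {s : Finset E} {d : ℕ} (hd : 0 < d)
    (ht : ∀ a, #{e ∈ s | t e = a} = d) (hh : ∀ b, #{e ∈ s | h e = b} = d) :
    ∃ M ⊆ s, (∀ a, ∃! e, e ∈ M ∧ t e = a) ∧ ∀ b, ∃! e, e ∈ M ∧ h e = b := by
  set N : A → Finset B := fun a => {e ∈ s | t e = a}.image h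
  have hall : ∀ S : Finset A, #S ≤ #(S.biUnion N) := by
    intro S
    refine Nat.le_of_mul_le_mul_right ?_ hd
    rw [← card_filter_mem_eq_mul ht, ← card_filter_mem_eq_mul hh]
    refine card_le_card fun e he => ?_
    simp only [mem_filter, mem_biUnion, N, mem_image] at he ⊢
    exact ⟨he.1, t e, he.2, e, ⟨he.1, rfl⟩, rfl⟩
  obtain ⟨σ, hσ_inj, hσ⟩ := (all_card_le_biUnion_card_iff_exists_injective N).1 hall
  have hcard : Fintype.card A = Fintype.card B := by
    refine Nat.eq_of_mul_eq_mul_right hd ?_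
    have hA := card_filter_mem_eq_mul ht univ
    have hB := card_filter_mem_eq_mul hh univ
    simp only [mem_univ, card_univ] at hA hB
    rw [← hA, hB]
  have hσ_surj := ((Fintype.bijective_iff_injective_and_card σ).2 ⟨hσ_inj, hcard⟩).2
  have hpick : ∀ a, ∃ e ∈ s, t e = a ∧ h e = σ a := fun a => by
    simpa [N, and_assoc] using hσ a
  choose m hms hmt hmh using hpick
  refine ⟨univ.image m, fun e he => ?_, fun a => ⟨m a, ?_, ?_⟩, fun b => ?_⟩
  · obtain ⟨a, -, rfl⟩ := mem_image.1 he
    exact hms a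
  · exact ⟨mem_image_of_mem m (mem_univ a), hmt a⟩
  · rintro e ⟨he, rfl⟩
    obtain ⟨a', -, rfl⟩ := mem_image.1 he
    rw [hmt]
  · obtain ⟨a, rfl⟩ := hσ_surj b
    refine ⟨m a, ⟨mem_image_of_mem m (mem_univ a), hmh a⟩, ?_⟩
    rintro e ⟨he, hea⟩
    obtain ⟨a', -, rfl⟩ := mem_image.1 he
    obtain rfl := hσ_inj ((hmh a').symm.trans hea)
    rfl

/-- König's edge colouring theorem for `d`-regular bipartite multigraphs, with edge set `s`
and endpoint maps `t` and `h`. -/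
theorem exists_coloring_of_regular (d : ℕ) {s : Finset E} (ht : ∀ a, #{e ∈ s | t e = a} = d)
    (hh : ∀ b, #{e ∈ s | h e = b} = d) :
    ∃ c : E → ℕ, (∀ e ∈ s, c e < d) ∧ (∀ a, ∀ i < d, ∃! e, e ∈ s ∧ t e = a ∧ c e = i) ∧
      ∀ b, ∀ i < d, ∃! e, e ∈ s ∧ h e = b ∧ c e = i := by
  induction d generalizing s with
  | zero =>
    refine ⟨0, fun e he => ?_, by simp, by simp⟩
    have := ht (t e)
    rw [card_eq_zero, filter_eq_empty_iff] at this
    exact absurd rfl (this he)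
  | succ d ih =>
    obtain ⟨M, hMs, hMt, hMh⟩ := exists_perfectMatching_of_regular d.succ_pos ht hh
    obtain ⟨c, hc, hct, hch⟩ := ih (s := s \ M)
      (fun a => by have := card_filter_sdiff_of_existsUnique hMs (hMt a); have := ht a; omega)
      (fun b => by have := card_filter_sdiff_of_existsUnique hMs (hMh b); have := hh b; omega)
    refine ⟨fun e => if e ∈ M then d else c e, fun e he => ?_,
      existsUnique_extend_coloring hMs hMt hc hct, existsUnique_extend_coloring hMs hMh hc hch⟩
    by_cases heM : e ∈ M
    · simp [heM]
    · simpa [heM] using (hc e (mem_sdiff.2 ⟨he, heM⟩)).trans d.lt_succ_self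

end Konig

section Ports

variable {X Y : Type*} {d r : ℕ}

theorem exists_block_enumeration [Fintype X] (R : X → Y → Prop) [DecidableRel R]
    (hY : ∀ y, #{x | R x y} = d * r) :
    ∃ nb : Y → Fin r × Fin d → X, (∀ y, Injective (nb y)) ∧ ∀ x y, R x y ↔ ∃ q, nb y q = x := by
  have hcard : ∀ y, Fintype.card (Fin r × Fin d) = Fintype.card {x // R x y} := fun y => by
    rw [Fintype.card_subtype, hY, Fintype.card_prod, Fintype.card_fin, Fintype.card_fin, mul_comm]
  refine ⟨fun y q => Fintype.equivOfCardEq (hcard y) q, fun y =>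
    Subtype.val_injective.comp (Fintype.equivOfCardEq (hcard y)).injective,
    fun x y => ⟨fun hxy => ⟨(Fintype.equivOfCardEq (hcard y)).symm ⟨x, hxy⟩, by simp⟩, ?_⟩⟩
  rintro ⟨q, rfl⟩
  exact (Fintype.equivOfCardEq (hcard y) q).2

variable [Fintype Y] [DecidableEq X] [DecidableEq Y]

-- An edge `((y, j), k)` of the blow-up joins `nb y (j, k)` to the block `(y, j)`.
theorem card_filter_blowup_eq {nb : Y → Fin r × Fin d → X} (hnb : ∀ y, Injective (nb y))
    (hX : ∀ x, #{y | ∃ q, nb y q = x} = d) :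
    (∀ x, #{p : (Y × Fin r) × Fin d | nb p.1.1 (p.1.2, p.2) = x} = d) ∧
      ∀ b, #{p : (Y × Fin r) × Fin d | p.1 = b} = d := by
  refine ⟨fun x => (card_nbij (fun p => p.1.1) (fun p hp => ?_) ?_ (fun y hy => ?_)).trans (hX x),
    fun b => ?_⟩
  · simp only [coe_filter, mem_univ, true_and, Set.mem_ofPred_eq] at hp ⊢
    exact ⟨_, hp⟩
  · rintro ⟨⟨y, j⟩, k⟩ hp ⟨⟨y', j'⟩, k'⟩ hp' (rfl : y = y')
    simp only [coe_filter, mem_univ, true_and, Set.mem_ofPred_eq] at hp hp'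
    obtain ⟨rfl, rfl⟩ := Prod.ext_iff.1 (hnb y (hp.trans hp'.symm))
    rfl
  · simp only [coe_filter, mem_univ, true_and, Set.mem_ofPred_eq] at hy
    obtain ⟨q, hq⟩ := hy
    exact ⟨((y, q.1), q.2), by simpa using hq, rfl⟩
  · have : ({p | p.1 = b} : Finset ((Y × Fin r) × Fin d)) = {b} ×ˢ univ := by
      ext ⟨b', k⟩
      simp [eq_comm]
    rw [this, card_product, card_singleton, card_fin, one_mul]

theorem exists_ports_of_biregular [Fintype X] (R : X → Y → Prop) [DecidableRel R]
    (hX : ∀ x, #{y | R x y} = d) (hY : ∀ y, #{x | R x y} = d * r) :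
    ∃ ν : X → Fin d → Y, (∀ x, Injective (ν x)) ∧ (∀ x y, R x y ↔ ∃ i, ν x i = y) ∧
      ∀ i y, #{x | ν x i = y} = r := by
  obtain ⟨nb, hnb, hR⟩ := exists_block_enumeration R hY
  obtain ⟨ht, hh⟩ := card_filter_blowup_eq hnb fun x => by simpa only [hR] using hX x
  set t : (Y × Fin r) × Fin d → X := fun p => nb p.1.1 (p.1.2, p.2)
  obtain ⟨c, hc, hct, hch⟩ := exists_coloring_of_regular d ht hh
  simp only [mem_univ, true_and] at hct hch
  choose P hPt hPc using fun x (i : Fin d) => (hct x i i.isLt).exists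
  have hP : ∀ x (i : Fin d) p, t p = x → c p = i → P x i = p := fun x i p hpt hpc =>
    (hct x i i.isLt).unique ⟨hPt x i, hPc x i⟩ ⟨hpt, hpc⟩
  refine ⟨fun x i => (P x i).1.1, fun x i i' hii' => ?_, fun x y => ⟨fun hxy => ?_, ?_⟩,
    fun i y => ?_⟩
  · have hq : ((P x i).1.2, (P x i).2) = ((P x i').1.2, (P x i').2) :=
      hnb _ ((hPt x i).trans ((hPt x i').symm.trans (by simp only [hii'])))
    obtain ⟨hj, hk⟩ := Prod.ext_iff.1 hq
    have hPi : P x i = P x i' := Prod.ext (Prod.ext hii' hj) hk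
    exact Fin.ext ((hPc x i).symm.trans ((congrArg c hPi).trans (hPc x i')))
  · obtain ⟨⟨j, k⟩, hq⟩ := (hR x y).1 hxy
    exact ⟨⟨c ((y, j), k), hc _ (mem_univ _)⟩, congrArg (·.1.1) (hP x _ ((y, j), k) hq rfl)⟩
  · rintro ⟨i, rfl⟩
    exact (hR _ _).2 ⟨_, hPt x i⟩
  · refine (card_nbij (fun x => (P x i).1.2) (fun _ _ => mem_coe.2 (mem_univ _))
      (fun x hx x' hx' hxx' => ?_) (fun j _ => ?_)).trans (card_fin r)
    · simp only [coe_filter, mem_univ, true_and, Set.mem_ofPred_eq] at hx hx'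
      have : (P x i).1 = (P x' i).1 := Prod.ext (hx.trans hx'.symm) hxx'
      rw [← hPt x i, ← hPt x' i, (hch _ i i.isLt).unique ⟨this, hPc x i⟩ ⟨rfl, hPc x' i⟩]
    · obtain ⟨p, hpb, hpc⟩ := (hch (y, j) i i.isLt).exists
      have := hP (t p) i p rfl hpc
      exact ⟨t p, by simp [this, hpb], by simp [this, hpb]⟩

end Ports

section Interval

theorem isIntervalColoring_of_existsUnique {G : SimpleGraph V} {c : Sym2 V → ℕ}
    (h : ∀ v, ∃ a b, 1 ≤ a ∧ (∀ e ∈ G.incidenceSet v, c e ∈ Set.Icc a b) ∧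
      ∀ k ∈ Set.Icc a b, ∃! e, e ∈ G.incidenceSet v ∧ c e = k) :
    IsIntervalColoring G c := by
  refine ⟨?_, fun e he => ?_, ?_⟩
  · rintro e₁ he₁ e₂ he₂ hne ⟨v, hv₁, hv₂⟩ hc
    obtain ⟨a, b, -, hab, huniq⟩ := h v
    exact hne ((huniq _ (hab e₁ ⟨he₁, hv₁⟩)).unique ⟨⟨he₁, hv₁⟩, rfl⟩ ⟨⟨he₂, hv₂⟩, hc.symm⟩)
  · induction e using Sym2.ind with
    | _ u w =>
      obtain ⟨a, b, ha, hab, -⟩ := h u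
      exact ha.trans (hab _ ⟨he, Sym2.mem_mk_left u w⟩).1
  · rintro v _ ⟨e₁, he₁, hv₁, rfl⟩ _ ⟨e₂, he₂, hv₂, rfl⟩ k hk₁ hk₂
    obtain ⟨a, b, -, hab, huniq⟩ := h v
    obtain ⟨e, ⟨he, hv⟩, hce⟩ := (huniq k ⟨(hab e₁ ⟨he₁, hv₁⟩).1.trans hk₁,
      hk₂.trans (hab e₂ ⟨he₂, hv₂⟩).2⟩).exists
    exact ⟨e, he, hv, hce⟩

theorem intervalDecomposition_two_of_sup {G H₁ H₂ : SimpleGraph V} (hG : G = H₁ ⊔ H₂)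
    (hd : Disjoint H₁ H₂) (h₁ : IntervalColorable H₁) (h₂ : IntervalColorable H₂) :
    IntervalDecomposition G 2 := by
  subst hG
  have hd' := SimpleGraph.disjoint_edgeSet.2 hd
  refine ⟨![H₁, H₂], Fin.forall_fin_two.2 ⟨le_sup_left, le_sup_right⟩,
    Fin.forall_fin_two.2 ⟨h₁, h₂⟩, fun e he => ?_⟩
  rcases (SimpleGraph.edgeSet_sup H₁ H₂ ▸ he) with he | he
  · exact ⟨0, he, Fin.forall_fin_two.2
      ⟨fun _ => rfl, fun he' => absurd he' (hd'.notMem_of_mem_left he)⟩⟩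
  · exact ⟨1, he, Fin.forall_fin_two.2
      ⟨fun he' => absurd he (hd'.notMem_of_mem_left he'), fun _ => rfl⟩⟩

end Interval

section PortGraph

open Sum

variable {X Y : Type*} {m : ℕ}

def portGraph (φ : X → Fin m → Y) : SimpleGraph (X ⊕ Y) :=
  SimpleGraph.fromEdgeSet (Set.range fun p : X × Fin m => s(inl p.1, inr (φ p.1 p.2)))

variable {φ : X → Fin m → Y}

theorem mem_edgeSet_portGraph {e : Sym2 (X ⊕ Y)} :
    e ∈ (portGraph φ).edgeSet ↔ ∃ x i, s(inl x, inr (φ x i)) = e := by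
  simp only [portGraph, SimpleGraph.edgeSet_fromEdgeSet, Set.mem_sdiff, Set.mem_range,
    Prod.exists, and_iff_left_iff_imp, forall_exists_index]
  rintro x i rfl
  simp

theorem mem_incidenceSet_portGraph_inl {x : X} {e : Sym2 (X ⊕ Y)} :
    e ∈ (portGraph φ).incidenceSet (inl x) ↔ ∃ i, s(inl x, inr (φ x i)) = e := by
  rw [SimpleGraph.incidenceSet, Set.mem_sep_iff, mem_edgeSet_portGraph]
  constructor
  · rintro ⟨⟨x', i, rfl⟩, hx⟩
    obtain rfl : x = x' := by simpa using hx
    exact ⟨i, rfl⟩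
  · rintro ⟨i, rfl⟩
    exact ⟨⟨x, i, rfl⟩, Sym2.mem_mk_left _ _⟩

theorem mem_incidenceSet_portGraph_inr {y : Y} {e : Sym2 (X ⊕ Y)} :
    e ∈ (portGraph φ).incidenceSet (inr y) ↔ ∃ x i, φ x i = y ∧ s(inl x, inr y) = e := by
  rw [SimpleGraph.incidenceSet, Set.mem_sep_iff, mem_edgeSet_portGraph]
  constructor
  · rintro ⟨⟨x, i, rfl⟩, hy⟩
    obtain rfl : y = φ x i := by simpa using Sym2.mem_iff.1 hy
    exact ⟨x, i, rfl, rfl⟩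
  · rintro ⟨x, i, rfl, rfl⟩
    exact ⟨⟨x, i, rfl⟩, Sym2.mem_mk_right _ _⟩

open Classical in
noncomputable def portColoring (φ : X → Fin m → Y) (c : X → ℕ) (e : Sym2 (X ⊕ Y)) : ℕ :=
  if h : ∃ p : X × Fin m, s(inl p.1, inr (φ p.1 p.2)) = e then
    m * c h.choose.1 + h.choose.2 + 1
  else 0

theorem portColoring_mk {c : X → ℕ} {x : X} (hφ : Injective (φ x)) (i : Fin m) :
    portColoring φ c s(inl x, inr (φ x i)) = m * c x + i + 1 := by
  have h : ∃ p : X × Fin m, s(inl p.1, inr (φ p.1 p.2)) = s(inl x, inr (φ x i)) := ⟨(x, i), rfl⟩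
  obtain ⟨hx, hi⟩ : h.choose.1 = x ∧ φ h.choose.1 h.choose.2 = φ x i := by
    simpa using h.choose_spec
  rw [hx] at hi
  rw [portColoring, dif_pos h, hx, hφ hi]

theorem existsUnique_portColoring_inl {c : X → ℕ} {x : X} (hφ : Injective (φ x)) {k : ℕ}
    (hk : k ∈ Set.Icc (m * c x + 1) (m * c x + m)) :
    ∃! e, e ∈ (portGraph φ).incidenceSet (inl x) ∧ portColoring φ c e = k := by
  obtain ⟨hk₁, hk₂⟩ := hk
  have hi : k - (m * c x + 1) < m := by omega
  refine ⟨s(inl x, inr (φ x ⟨_, hi⟩)), ⟨mem_incidenceSet_portGraph_inl.2 ⟨_, rfl⟩, ?_⟩, ?_⟩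
  · rw [portColoring_mk hφ, Fin.val_mk]
    omega
  · rintro e ⟨he, hce⟩
    obtain ⟨i, rfl⟩ := mem_incidenceSet_portGraph_inl.1 he
    rw [portColoring_mk hφ] at hce
    rw [show i = ⟨_, hi⟩ from Fin.ext (show (i : ℕ) = k - (m * c x + 1) by omega)]

theorem existsUnique_portColoring_inr (hφ : ∀ x, Injective (φ x)) {c : X → ℕ} {r : ℕ}
    (hlatin : ∀ y i, ∀ j < r, ∃! x, φ x i = y ∧ c x = j) {y : Y} {k : ℕ}
    (hk : k ∈ Set.Icc 1 (m * r)) :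
    ∃! e, e ∈ (portGraph φ).incidenceSet (inr y) ∧ portColoring φ c e = k := by
  obtain ⟨hk₁, hk₂⟩ := hk
  have hm : 0 < m := pos_of_mul_pos_left (a := m) (b := r) (by omega) (Nat.zero_le r)
  have hj : (k - 1) / m < r := Nat.div_lt_of_lt_mul (by omega)
  obtain ⟨x, ⟨hxi, hxj⟩, hx⟩ := hlatin y ⟨_, Nat.mod_lt (k - 1) hm⟩ _ hj
  refine ⟨s(inl x, inr y), ⟨mem_incidenceSet_portGraph_inr.2 ⟨x, _, hxi, rfl⟩, ?_⟩, ?_⟩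
  · rw [← hxi, portColoring_mk (hφ x), hxj, Fin.val_mk]
    have := Nat.div_add_mod (k - 1) m
    omega
  · rintro e ⟨he, hce⟩
    obtain ⟨x', i', hx'i', rfl⟩ := mem_incidenceSet_portGraph_inr.1 he
    rw [← hx'i', portColoring_mk (hφ x')] at hce
    obtain ⟨hj', hi'⟩ := (Nat.div_mod_unique hm).2
      (show (i' : ℕ) + m * c x' = k - 1 ∧ (i' : ℕ) < m from ⟨by omega, i'.isLt⟩)
    have hi'' : (⟨(k - 1) % m, Nat.mod_lt _ hm⟩ : Fin m) = i' := Fin.ext hi'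
    rw [hx x' ⟨hi'' ▸ hx'i', hj'.symm⟩]

theorem intervalColorable_portGraph (hφ : ∀ x, Injective (φ x)) {c : X → ℕ} {r : ℕ}
    (hc : ∀ x, c x < r) (hlatin : ∀ y i, ∀ j < r, ∃! x, φ x i = y ∧ c x = j) :
    IntervalColorable (portGraph φ) := by
  refine ⟨portColoring φ c, isIntervalColoring_of_existsUnique ?_⟩
  rintro (x | y)
  · refine ⟨m * c x + 1, m * c x + m, by omega, fun e he => ?_,
      fun k hk => existsUnique_portColoring_inl (hφ x) hk⟩
    obtain ⟨i, rfl⟩ := mem_incidenceSet_portGraph_inl.1 he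
    rw [portColoring_mk (hφ x)]
    exact ⟨by omega, by omega⟩
  · refine ⟨1, m * r, le_rfl, fun e he => ?_,
      fun k hk => existsUnique_portColoring_inr hφ hlatin hk⟩
    obtain ⟨x, i, rfl, rfl⟩ := mem_incidenceSet_portGraph_inr.1 he
    rw [portColoring_mk (hφ x)]
    have : m * (c x + 1) ≤ m * r := Nat.mul_le_mul_left m (hc x)
    exact ⟨by omega, by rw [Nat.mul_succ] at this; omega⟩

end PortGraph

section Split

open Sum

variable {X Y : Type*} {n : ℕ}

theorem portGraph_eq_sup (φ : X → Fin (n + 1) → Y) :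
    portGraph φ = portGraph (fun x (_ : Fin 1) => φ x 0) ⊔ portGraph (fun x i => φ x i.succ) := by
  rw [← SimpleGraph.edgeSet_inj, SimpleGraph.edgeSet_sup]
  ext e
  simp only [Set.mem_union, mem_edgeSet_portGraph, Fin.exists_fin_succ, exists_const, exists_or]

theorem disjoint_portGraph {φ : X → Fin (n + 1) → Y} (hφ : ∀ x, Injective (φ x)) :
    Disjoint (portGraph fun x (_ : Fin 1) => φ x 0) (portGraph fun x i => φ x i.succ) := by
  rw [← SimpleGraph.disjoint_edgeSet, Set.disjoint_left]
  intro e he he'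
  obtain ⟨x, -, rfl⟩ := mem_edgeSet_portGraph.1 he
  obtain ⟨x', i, h⟩ := mem_edgeSet_portGraph.1 he'
  obtain ⟨rfl, h⟩ : x' = x ∧ φ x' i.succ = φ x 0 := by simpa using h
  exact Fin.succ_ne_zero i (hφ _ h)

end Split

section Bipartite

open Sum

variable {X Y : Type*} {G : SimpleGraph (X ⊕ Y)}

theorem eq_portGraph {m : ℕ} {ν : X → Fin m → Y} (hX : ∀ x x' : X, ¬ G.Adj (inl x) (inl x'))
    (hY : ∀ y y' : Y, ¬ G.Adj (inr y) (inr y'))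
    (hν : ∀ x y, G.Adj (inl x) (inr y) ↔ ∃ i, ν x i = y) : G = portGraph ν := by
  rw [← SimpleGraph.edgeSet_inj]
  ext e
  induction e using Sym2.ind with
  | _ u v =>
    rw [SimpleGraph.mem_edgeSet, mem_edgeSet_portGraph]
    rcases u with x | y <;> rcases v with x' | y'
    · simp [hX]
    · simp [hν]
    · simp [G.adj_comm, hν]
    · simp [hY]

variable [Fintype X] [Fintype Y] [DecidableRel G.Adj]

theorem degree_inl_eq_card (hX : ∀ x x' : X, ¬ G.Adj (inl x) (inl x')) (x : X) :
    G.degree (inl x) = #{y | G.Adj (inl x) (inr y)} := by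
  have : G.neighborFinset (inl x) = ({y | G.Adj (inl x) (inr y)} : Finset Y).map .inr := by
    ext (x' | y) <;> simp [hX]
  rw [← card_neighborFinset_eq_degree, this, card_map]

theorem degree_inr_eq_card (hY : ∀ y y' : Y, ¬ G.Adj (inr y) (inr y')) (y : Y) :
    G.degree (inr y) = #{x | G.Adj (inl x) (inr y)} := by
  have : G.neighborFinset (inr y) = ({x | G.Adj (inl x) (inr y)} : Finset X).map .inl := by
    ext (x | y') <;> simp [hY, G.adj_comm]
  rw [← card_neighborFinset_eq_degree, this, card_map]

end Bipartite

theorem biregular_three_intervalThickness_le_two_general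
    {X Y : Type*} [Fintype X] [Fintype Y]
    (G : SimpleGraph (X ⊕ Y)) [DecidableRel G.Adj] (r : ℕ)
    (hX : ∀ x x' : X, ¬ G.Adj (Sum.inl x) (Sum.inl x'))
    (hY : ∀ y y' : Y, ¬ G.Adj (Sum.inr y) (Sum.inr y'))
    (hdX : ∀ x : X, G.degree (Sum.inl x) = 3)
    (hdY : ∀ y : Y, G.degree (Sum.inr y) = 3 * r) :
    intervalThickness G ≤ 2 := by
  classical
  obtain ⟨ν, hν_inj, hν_adj, hν_card⟩ :=
    exists_ports_of_biregular (fun x y => G.Adj (Sum.inl x) (Sum.inr y))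
      (fun x => (degree_inl_eq_card hX x).symm.trans (hdX x))
      (fun y => (degree_inr_eq_card hY y).symm.trans (hdY y))
  refine Nat.sInf_le (intervalDecomposition_two_of_sup
    ((eq_portGraph hX hY hν_adj).trans (portGraph_eq_sup ν)) (disjoint_portGraph hν_inj) ?_ ?_)
  · -- With both endpoint maps equal, König's theorem just numbers the edges of each star.
    obtain ⟨c, hc, hlatin, -⟩ := exists_coloring_of_regular r (hν_card 0) (hν_card 0)
    simp only [mem_univ, true_and, forall_const] at hc hlatin
    exact intervalColorable_portGraph (fun x => injective_of_subsingleton _) hc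
      fun y => Fin.forall_fin_one.2 (hlatin y)
  · obtain ⟨c, hc, htail, hhead⟩ := exists_coloring_of_regular r (hν_card 1) (hν_card 2)
    simp only [mem_univ, true_and, forall_const] at hc htail hhead
    exact intervalColorable_portGraph (fun x => (hν_inj x).comp (Fin.succ_injective 2)) hc
      fun y => Fin.forall_fin_two.2 ⟨htail y, hhead y⟩

theorem biregular_three_intervalThickness_le_two
    {X Y : Type*} [Fintype X] [Fintype Y] [DecidableEq X] [DecidableEq Y]
    (G : SimpleGraph (X ⊕ Y)) [DecidableRel G.Adj] (r : ℕ) (hr : 2 ≤ r)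
    (hX : ∀ x x' : X, ¬ G.Adj (Sum.inl x) (Sum.inl x'))
    (hY : ∀ y y' : Y, ¬ G.Adj (Sum.inr y) (Sum.inr y'))
    (hdX : ∀ x : X, G.degree (Sum.inl x) = 3)
    (hdY : ∀ y : Y, G.degree (Sum.inr y) = 3 * r) :
    intervalThickness G ≤ 2 :=
  biregular_three_intervalThickness_le_two_general G r hX hY hdX hdY
end

section
/- Every (k, kr)-biregular bipartite graph with k ≥ 4 and r ≥ 2 satisfies θ_int(G) ≤ k − 2. -/
open SimpleGraph

variable {V : Type*}

/-!
Call a bipartite multigraph `(d, d')`-biregular if its left vertices have degree `d` and its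
right vertices degree `d'`. A `(d, d * r)`-biregular multigraph splits into `d` spanning
`(1, r)`-factors: Hall's theorem, applied after replacing each right vertex by `r` copies, yields
one factor, and removing it lowers `d` by one. Applied to `G`, this gives `k` factors.

A single factor is a union of stars centred in `Y`; numbering the edges at each centre
`1, …, r` is an interval colouring. The union of two factors is `(2, 2r)`-biregular. Splitting it
once more, with `d = 2`, orients it: each `x` gets one outgoing edge to `out x` and one incoming
edge from `inn x`, and each `y` has `r` edges of each kind. The bipartite multigraph between two
copies of `Y` with an edge from `out x` to `inn x` for every `x` is `r`-regular, so it splits into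
`r` perfect matchings; let `ψ x` be the matching of `x`. Colour the out-edge of `x` with
`2 ψ x + 1` and its in-edge with `2 ψ x + 2`. Then every `x` sees two consecutive colours and
every `y` sees exactly `1, …, 2r`. Keeping `k - 4` factors on their own and pairing up the last
four gives `k - 2` interval colourable parts.
-/

open Finset

theorem Set.Subsingleton.ordConnected {α : Type*} [PartialOrder α] {s : Set α}
    (hs : s.Subsingleton) : s.OrdConnected := by
  rcases hs.eq_empty_or_singleton with rfl | ⟨a, rfl⟩
  exacts [Set.ordConnected_empty, Set.ordConnected_singleton]

section IntervalColoring

variable {G : SimpleGraph V} {c : Sym2 V → ℕ}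

theorem colorsAt_eq_image (v : V) :
    colorsAt G c v = (fun w => c s(v, w)) '' G.neighborSet v := by
  ext n
  constructor
  · rintro ⟨e, he, hve, rfl⟩
    obtain ⟨w, rfl⟩ := Sym2.mem_iff_exists.1 hve
    exact ⟨w, he, rfl⟩
  · rintro ⟨w, hw, rfl⟩
    exact ⟨s(v, w), hw, Sym2.mem_mk_left v w, rfl⟩

theorem isIntervalColoring_of_forall_neighborSet (hpos : ∀ v w, G.Adj v w → 0 < c s(v, w))
    (hinj : ∀ v, (G.neighborSet v).InjOn fun w => c s(v, w))
    (hint : ∀ v, ((fun w => c s(v, w)) '' G.neighborSet v).OrdConnected) :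
    IsIntervalColoring G c := by
  refine ⟨?_, fun e he => ?_, fun v a ha b hb n han hnb => ?_⟩
  · rintro e₁ he₁ e₂ he₂ hne ⟨v, hv₁, hv₂⟩
    obtain ⟨w₁, rfl⟩ := Sym2.mem_iff_exists.1 hv₁
    obtain ⟨w₂, rfl⟩ := Sym2.mem_iff_exists.1 hv₂
    exact fun h => hne (congrArg _ (hinj v he₁ he₂ h))
  · induction e using Sym2.ind with
    | h v w => exact hpos v w he
  · rw [colorsAt_eq_image] at ha hb ⊢
    exact (hint v).out ha hb ⟨han, hnb⟩

end IntervalColoring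

section BipartiteGraph

variable {X Y : Type*}

def bipartiteGraphOf (D : Set (X × Y)) : SimpleGraph (X ⊕ Y) where
  Adj
    | .inl x, .inr y => (x, y) ∈ D
    | .inr y, .inl x => (x, y) ∈ D
    | _, _ => False
  symm := ⟨by rintro (_ | _) (_ | _) h <;> exact h⟩
  loopless := ⟨by rintro (_ | _) h <;> exact h⟩

variable {D D' : Set (X × Y)}

@[simp]
theorem bipartiteGraphOf_adj_inl_inr {x : X} {y : Y} :
    (bipartiteGraphOf D).Adj (.inl x) (.inr y) ↔ (x, y) ∈ D := Iff.rfl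

@[simp]
theorem bipartiteGraphOf_adj_inr_inl {x : X} {y : Y} :
    (bipartiteGraphOf D).Adj (.inr y) (.inl x) ↔ (x, y) ∈ D := Iff.rfl

@[simp]
theorem bipartiteGraphOf_not_adj_inl_inl {x x' : X} :
    ¬(bipartiteGraphOf D).Adj (.inl x) (.inl x') := id

@[simp]
theorem bipartiteGraphOf_not_adj_inr_inr {y y' : Y} :
    ¬(bipartiteGraphOf D).Adj (.inr y) (.inr y') := id

theorem bipartiteGraphOf_mono (h : D ⊆ D') : bipartiteGraphOf D ≤ bipartiteGraphOf D' := by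
  rintro (_ | _) (_ | _) hadj
  all_goals first | exact h hadj | exact hadj.elim

theorem neighborSet_bipartiteGraphOf_inl (x : X) :
    (bipartiteGraphOf D).neighborSet (.inl x) = .inr '' {y | (x, y) ∈ D} := by
  ext (_ | _) <;> simp

theorem neighborSet_bipartiteGraphOf_inr (y : Y) :
    (bipartiteGraphOf D).neighborSet (.inr y) = .inl '' {x | (x, y) ∈ D} := by
  ext (_ | _) <;> simp

theorem eq_bipartiteGraphOf (G : SimpleGraph (X ⊕ Y))
    (hX : ∀ x x' : X, ¬G.Adj (.inl x) (.inl x')) (hY : ∀ y y' : Y, ¬G.Adj (.inr y) (.inr y')) :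
    G = bipartiteGraphOf {e | G.Adj (.inl e.1) (.inr e.2)} := by
  ext (_ | _) (_ | _) <;> simp [hX, hY, G.adj_comm]

end BipartiteGraph

section BipartiteColoring

variable {X Y : Type*} {D : Set (X × Y)}

theorem intervalColorable_bipartiteGraphOf (col : X → Y → ℕ)
    (hpos : ∀ x y, (x, y) ∈ D → 0 < col x y)
    (hinjX : ∀ x, {y | (x, y) ∈ D}.InjOn (col x))
    (hinjY : ∀ y, {x | (x, y) ∈ D}.InjOn (col · y))
    (hX : ∀ x, (col x '' {y | (x, y) ∈ D}).OrdConnected)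
    (hY : ∀ y, ((col · y) '' {x | (x, y) ∈ D}).OrdConnected) :
    IntervalColorable (bipartiteGraphOf D) := by
  let f : X ⊕ Y → X ⊕ Y → ℕ
    | .inl x, .inr y => col x y
    | .inr y, .inl x => col x y
    | _, _ => 0
  refine ⟨Sym2.lift ⟨f, by rintro (_ | _) (_ | _) <;> rfl⟩,
    isIntervalColoring_of_forall_neighborSet ?_ ?_ ?_⟩
  · rintro (x | y) (x' | y') h
    all_goals first | exact hpos _ _ h | exact h.elim
  · rintro (x | y)
    · rw [neighborSet_bipartiteGraphOf_inl]
      rintro _ ⟨y, hy, rfl⟩ _ ⟨y', hy', rfl⟩ h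
      rw [hinjX x hy hy' h]
    · rw [neighborSet_bipartiteGraphOf_inr]
      rintro _ ⟨x, hx, rfl⟩ _ ⟨x', hx', rfl⟩ h
      rw [hinjY y hx hx' h]
  · rintro (x | y)
    · rw [neighborSet_bipartiteGraphOf_inl, Set.image_image]
      exact hX x
    · rw [neighborSet_bipartiteGraphOf_inr, Set.image_image]
      exact hY y

theorem intervalColorable_bipartiteGraphOf_of_subsingleton [Finite X]
    (hD : ∀ x, {y | (x, y) ∈ D}.Subsingleton) : IntervalColorable (bipartiteGraphOf D) := by
  classical
  let idx (y : Y) : {x // (x, y) ∈ D} ≃ Fin (Nat.card {x // (x, y) ∈ D}) := Finite.equivFin _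
  let col (x : X) (y : Y) : ℕ := if h : (x, y) ∈ D then idx y ⟨x, h⟩ + 1 else 0
  have hcol : ∀ x y (h : (x, y) ∈ D), col x y = idx y ⟨x, h⟩ + 1 := fun x y h => dif_pos h
  refine intervalColorable_bipartiteGraphOf col (fun x y h => by simp [hcol x y h])
    (fun x => (hD x).injOn _) (fun y x hx x' hx' h => ?_)
    (fun x => ((hD x).image _).ordConnected) (fun y => ⟨?_⟩)
  · dsimp only at h
    rw [hcol x y hx, hcol x' y hx', add_left_inj, Fin.val_inj] at h
    exact congrArg Subtype.val ((idx y).injective h)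
  · rintro _ ⟨x, hx, rfl⟩ _ ⟨x', hx', rfl⟩ n ⟨hn, hn'⟩
    dsimp only at hn hn'
    rw [hcol x y hx] at hn
    rw [hcol x' y hx'] at hn'
    let z := (idx y).symm ⟨n - 1, by omega⟩
    refine ⟨z, z.2, ?_⟩
    simp only [hcol _ y z.2, z, Subtype.coe_eta, Equiv.apply_symm_apply]
    omega

theorem intervalColorable_of_pairing (out inn : X → Y) (ψ : X → ℕ) {r : ℕ}
    (hne : ∀ x, out x ≠ inn x) (hψr : ∀ x, ψ x < r) (hout : ∀ j < r, ∀ y, ∃! x, ψ x = j ∧ out x = y)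
    (hinn : ∀ j < r, ∀ y, ∃! x, ψ x = j ∧ inn x = y) :
    IntervalColorable (bipartiteGraphOf {e | out e.1 = e.2 ∨ inn e.1 = e.2}) := by
  classical
  let col (x : X) (y : Y) : ℕ := if out x = y then 2 * ψ x + 1 else 2 * ψ x + 2
  have hcol_out : ∀ x y, out x = y → col x y = 2 * ψ x + 1 := fun x y h => if_pos h
  have hcol_inn : ∀ x y, inn x = y → col x y = 2 * ψ x + 2 := fun x y h => if_neg (h ▸ hne x)
  refine intervalColorable_bipartiteGraphOf col ?_ ?_ ?_ (fun x => ?_) (fun y => ?_)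
  · intro x y (hxy : out x = y ∨ inn x = y)
    rcases hxy with h | h <;> simp [hcol_out, hcol_inn, h]
  · intro x y (hy : out x = y ∨ inn x = y) y' (hy' : out x = y' ∨ inn x = y') h
    rcases hy with hy | hy <;> rcases hy' with hy' | hy' <;>
      simp (disch := assumption) only [hcol_out, hcol_inn] at h
    exacts [hy.symm.trans hy', by omega, by omega, hy.symm.trans hy']
  · intro y x (hx : out x = y ∨ inn x = y) x' (hx' : out x' = y ∨ inn x' = y) h
    dsimp only at h
    rcases hx with hx | hx <;> rcases hx' with hx' | hx' <;>
      simp (disch := assumption) only [hcol_out, hcol_inn] at h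
    exacts [(hout _ (hψr x) y).unique ⟨rfl, hx⟩ ⟨by omega, hx'⟩, by omega, by omega,
      (hinn _ (hψr x) y).unique ⟨rfl, hx⟩ ⟨by omega, hx'⟩]
  · have hX : col x '' {y | out x = y ∨ inn x = y} = Set.Icc (2 * ψ x + 1) (2 * ψ x + 2) := by
      refine Set.Subset.antisymm ?_ fun n ⟨h1, h2⟩ => ?_
      · rintro _ ⟨y, hy | hy, rfl⟩ <;>
          simp (disch := assumption) only [hcol_out, hcol_inn, Set.mem_Icc] <;> omega
      · obtain rfl | rfl : n = 2 * ψ x + 1 ∨ n = 2 * ψ x + 2 := by omega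
        exacts [⟨out x, .inl rfl, hcol_out x _ rfl⟩, ⟨inn x, .inr rfl, hcol_inn x _ rfl⟩]
    exact hX ▸ Set.ordConnected_Icc
  · have hY : (col · y) '' {x | out x = y ∨ inn x = y} = Set.Icc 1 (2 * r) := by
      refine Set.Subset.antisymm ?_ fun n ⟨h1, h2⟩ => ?_
      · rintro _ ⟨x, hx | hx, rfl⟩ <;> have := hψr x <;>
          simp (disch := assumption) only [hcol_out, hcol_inn, Set.mem_Icc] <;> omega
      · rcases Nat.even_or_odd' n with ⟨j, rfl | rfl⟩
        · obtain ⟨x, ⟨hψx, hx⟩, -⟩ := hinn (j - 1) (by omega) y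
          exact ⟨x, .inr hx, show col x y = _ by rw [hcol_inn x y hx, hψx]; omega⟩
        · obtain ⟨x, ⟨hψx, hx⟩, -⟩ := hout j (by omega) y
          exact ⟨x, .inl hx, show col x y = _ by rw [hcol_out x y hx, hψx]⟩
    exact hY ▸ Set.ordConnected_Icc

end BipartiteColoring

section Biregular

variable {ε A B : Type*} [DecidableEq A] [DecidableEq B]

/-- `E` is the edge set of a bipartite multigraph in which `e` joins `p e ∈ A` to `q e ∈ B`. -/
def IsBiregular (E : Finset ε) (p : ε → A) (q : ε → B) (d d' : ℕ) : Prop :=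
  (∀ a, #{e ∈ E | p e = a} = d) ∧ ∀ b, #{e ∈ E | q e = b} = d'

variable {E M : Finset ε} {p : ε → A} {q : ε → B} {d d' m m' r : ℕ}

theorem card_filter_mem_of_card_fiber {f : ε → A} (hf : ∀ a, #{e ∈ E | f e = a} = d)
    (S : Finset A) : #{e ∈ E | f e ∈ S} = #S * d := by
  rw [← sum_card_fiberwise_eq_card_filter, sum_congr rfl fun a _ => hf a, sum_const, smul_eq_mul]

theorem card_mul_of_card_fiber [Fintype A] {f : ε → A} (hf : ∀ a, #{e ∈ E | f e = a} = d) :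
    #E = Fintype.card A * d := by
  simpa using card_filter_mem_of_card_fiber hf univ

theorem IsBiregular.exists_bijective_split [Fintype A] [Fintype B]
    (hE : IsBiregular E p q d (d * r)) (hd : 0 < d) :
    ∃ g : A → B × Fin r, Function.Bijective g ∧ ∀ a, ∃ e ∈ E, p e = a ∧ q e = (g a).1 := by
  classical
  let nbhd (a : A) : Finset (B × Fin r) := {e ∈ E | p e = a}.image q ×ˢ univ
  have hall : ∀ S : Finset A, #S ≤ #(S.biUnion nbhd) := by
    intro S
    set N := {e ∈ E | p e ∈ S}.image q
    have hN : S.biUnion nbhd = N ×ˢ univ := by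
      ext ⟨b, i⟩
      simp only [nbhd, N, mem_biUnion, mem_product, mem_image, mem_filter, mem_univ, and_true]
      aesop
    have hcount : #S * d ≤ #N * (d * r) := by
      rw [← card_filter_mem_of_card_fiber hE.1, ← card_filter_mem_of_card_fiber hE.2]
      exact card_le_card fun e he => by
        simp only [mem_filter] at he ⊢
        exact ⟨he.1, mem_image_of_mem q (mem_filter.2 he)⟩
    rw [hN, card_product, card_univ, Fintype.card_fin]
    exact Nat.le_of_mul_le_mul_right (by linarith) hd
  obtain ⟨g, hg, hgnbhd⟩ := (all_card_le_biUnion_card_iff_exists_injective nbhd).1 hall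
  have hcard : Fintype.card A = Fintype.card (B × Fin r) := by
    have := (card_mul_of_card_fiber hE.1).symm.trans (card_mul_of_card_fiber hE.2)
    rw [Fintype.card_prod, Fintype.card_fin]
    exact Nat.eq_of_mul_eq_mul_right hd (by linarith)
  refine ⟨g, (Fintype.bijective_iff_injective_and_card g).2 ⟨hg, hcard⟩, fun a => ?_⟩
  simpa [nbhd, and_assoc] using (mem_product.1 (hgnbhd a)).1

theorem IsBiregular.exists_factor [Fintype A] [Fintype B] (hE : IsBiregular E p q d (d * r))
    (hd : 0 < d) : ∃ M ⊆ E, IsBiregular M p q 1 r := by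
  classical
  obtain ⟨g, hg, hsec⟩ := hE.exists_bijective_split hd
  choose m hmE hpm hqm using hsec
  have hm : Function.Injective m := fun a a' h => by rw [← hpm a, ← hpm a', h]
  refine ⟨univ.image m, image_subset_iff.2 fun a _ => hmE a, fun a => ?_, fun b => ?_⟩
  · rw [card_eq_one]
    refine ⟨m a, ?_⟩
    ext e
    simp only [mem_filter, mem_image, mem_univ, true_and, mem_singleton]
    constructor
    · rintro ⟨⟨a', rfl⟩, rfl⟩
      rw [hpm]
    · rintro rfl
      exact ⟨⟨a, rfl⟩, hpm a⟩
  · have hfib : {e ∈ univ.image m | q e = b} = ({a | (g a).1 = b} : Finset A).image m := by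
      ext e
      simp only [mem_filter, mem_image, mem_univ, true_and]
      constructor
      · rintro ⟨⟨a, rfl⟩, rfl⟩
        exact ⟨a, (hqm a).symm, rfl⟩
      · rintro ⟨a, ha, rfl⟩
        exact ⟨⟨a, rfl⟩, (hqm a).trans ha⟩
    rw [hfib, card_image_of_injective _ hm]
    calc #{a | (g a).1 = b}
        = #(univ : Finset (Fin r)) := by
          refine card_nbij (fun a => (g a).2) (fun a _ => mem_univ _) ?_ fun i _ => ?_
          · intro a ha a' ha' h
            simp only [coe_filter, mem_univ, true_and, Set.mem_ofPred_eq] at ha ha'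
            exact hg.1 (Prod.ext (ha.trans ha'.symm) h)
          · obtain ⟨a, ha⟩ := hg.2 (b, i)
            exact ⟨a, by simp [ha], by simp [ha]⟩
      _ = r := by simp

theorem card_filter_sdiff_of_subset [DecidableEq ε] {f : ε → A} {a : A} (h : M ⊆ E) :
    #{e ∈ E \ M | f e = a} = #{e ∈ E | f e = a} - #{e ∈ M | f e = a} := by
  rw [← card_sdiff_of_subset (filter_subset_filter _ h)]
  congr 1
  ext
  simp only [mem_filter, mem_sdiff]
  tauto

theorem IsBiregular.sdiff [DecidableEq ε] (hE : IsBiregular E p q d d')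
    (hM : IsBiregular M p q m m') (hME : M ⊆ E) : IsBiregular (E \ M) p q (d - m) (d' - m') :=
  ⟨fun a => by rw [card_filter_sdiff_of_subset hME, hE.1, hM.1],
    fun b => by rw [card_filter_sdiff_of_subset hME, hE.2, hM.2]⟩

theorem IsBiregular.union [DecidableEq ε] (hE : IsBiregular E p q d d')
    (hM : IsBiregular M p q m m') (hEM : Disjoint E M) :
    IsBiregular (E ∪ M) p q (d + m) (d' + m') :=
  ⟨fun a => by rw [filter_union, card_union_of_disjoint (disjoint_filter_filter hEM), hE.1, hM.1],
    fun b => by rw [filter_union, card_union_of_disjoint (disjoint_filter_filter hEM), hE.2, hM.2]⟩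

theorem IsBiregular.eq_empty_of_left_eq_zero (hE : IsBiregular E p q 0 d') : E = ∅ :=
  eq_empty_of_forall_notMem fun e he => by
    simpa [he] using (card_eq_zero.1 (hE.1 (p e))).le (mem_filter.2 ⟨he, rfl⟩)

theorem IsBiregular.exists_factorization [Fintype A] [Fintype B] [DecidableEq ε] :
    ∀ {d : ℕ} {E : Finset ε}, IsBiregular E p q d (d * r) →
      ∃ φ : ε → ℕ, (∀ e ∈ E, φ e < d) ∧ ∀ j < d, IsBiregular {e ∈ E | φ e = j} p q 1 r
  | 0, E, hE => ⟨0, by simp [hE.eq_empty_of_left_eq_zero], by simp⟩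
  | d + 1, E, hE => by
    obtain ⟨M, hME, hM⟩ := hE.exists_factor d.succ_pos
    have hrest : IsBiregular (E \ M) p q d (d * r) := by
      simpa [add_one_mul] using hE.sdiff hM hME
    obtain ⟨φ, hφd, hφ⟩ := hrest.exists_factorization
    refine ⟨fun e => if e ∈ M then d else φ e, fun e he => ?_, fun j hj => ?_⟩
    · dsimp only
      split_ifs with heM
      · exact d.lt_succ_self
      · exact (hφd e (mem_sdiff.2 ⟨he, heM⟩)).trans d.lt_succ_self
    rcases (Nat.lt_succ_iff_lt_or_eq.1 hj) with hjd | rfl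
    · convert hφ j hjd using 1
      ext e
      by_cases heM : e ∈ M <;> simp [heM]
      omega
    · convert hM using 1
      ext e
      by_cases heM : e ∈ M
      · simp [heM, hME heM]
      · simpa [heM] using fun he => (hφd e (mem_sdiff.2 ⟨he, heM⟩)).ne

theorem IsBiregular.existsUnique_fst (h : IsBiregular E p q 1 d') (a : A) :
    ∃! e, e ∈ E ∧ p e = a := by
  simpa using card_eq_one_iff_existsUnique.1 (h.1 a)

theorem IsBiregular.existsUnique_snd (h : IsBiregular E p q d 1) (b : B) :
    ∃! e, e ∈ E ∧ q e = b := by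
  simpa using card_eq_one_iff_existsUnique.1 (h.2 b)

end Biregular

section TwoFactor

variable {X Y : Type*} [Fintype X] [DecidableEq X] [DecidableEq Y] {r : ℕ}

theorem IsBiregular.exists_fun {F : Finset (X × Y)} (h : IsBiregular F Prod.fst Prod.snd 1 r) :
    ∃ f : X → Y, (∀ x y, (x, y) ∈ F ↔ f x = y) ∧ ∀ y, #{x | f x = y} = r := by
  choose e he heu using h.existsUnique_fst
  let f (x : X) : Y := (e x).2
  have hmem : ∀ x y, (x, y) ∈ F ↔ f x = y := fun x y =>
    ⟨fun hxy => by simp [f, ← heu x (x, y) ⟨hxy, rfl⟩],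
      fun hfy => (Prod.ext (he x).2 hfy : e x = (x, y)) ▸ (he x).1⟩
  refine ⟨f, hmem, fun y => (card_nbij (fun x => (x, y)) ?_ ?_ ?_).trans (h.2 y)⟩
  · intro x hx
    simpa [hmem] using hx
  · intro x _ x' _ hxx'
    exact congrArg Prod.fst hxx'
  · rintro ⟨x, y'⟩ hx
    simp only [coe_filter, Set.mem_ofPred_eq] at hx
    obtain ⟨hxy, rfl⟩ := hx
    exact ⟨x, by simpa [hmem] using hxy, rfl⟩

theorem IsBiregular.exists_orientation [Fintype Y] {F : Finset (X × Y)}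
    (h : IsBiregular F Prod.fst Prod.snd 2 (2 * r)) :
    ∃ out inn : X → Y, (∀ x y, (x, y) ∈ F ↔ out x = y ∨ inn x = y) ∧ (∀ x, out x ≠ inn x) ∧
      (∀ y, #{x | out x = y} = r) ∧ ∀ y, #{x | inn x = y} = r := by
  obtain ⟨φ, hφ2, hφ⟩ := h.exists_factorization
  obtain ⟨out, hout, hout_card⟩ := (hφ 0 two_pos).exists_fun
  obtain ⟨inn, hinn, hinn_card⟩ := (hφ 1 one_lt_two).exists_fun
  simp only [mem_filter] at hout hinn
  refine ⟨out, inn, fun x y => ?_, fun x hx => ?_, hout_card, hinn_card⟩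
  · rw [← hout, ← hinn]
    constructor
    · intro hxy
      by_cases h0 : φ (x, y) = 0
      · exact .inl ⟨hxy, h0⟩
      · exact .inr ⟨hxy, by have := hφ2 _ hxy; omega⟩
    · rintro (⟨hxy, -⟩ | ⟨hxy, -⟩) <;> exact hxy
  · have h0 := ((hout x (out x)).2 rfl).2
    have h1 := ((hinn x (out x)).2 hx.symm).2
    omega

theorem IsBiregular.intervalColorable_of_two [Fintype Y] {F : Finset (X × Y)}
    (h : IsBiregular F Prod.fst Prod.snd 2 (2 * r)) :
    IntervalColorable (bipartiteGraphOf (F : Set (X × Y))) := by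
  obtain ⟨out, inn, hF, hne, hout, hinn⟩ := h.exists_orientation
  have hreg : IsBiregular univ out inn r (r * 1) := ⟨hout, by simpa using hinn⟩
  obtain ⟨ψ, hψr, hψ⟩ := hreg.exists_factorization
  have hFeq : (F : Set (X × Y)) = {e | out e.1 = e.2 ∨ inn e.1 = e.2} := Set.ext fun e => hF e.1 e.2
  rw [hFeq]
  exact intervalColorable_of_pairing out inn ψ hne (fun x => hψr x (mem_univ x))
    (fun j hj y => by simpa using (hψ j hj).existsUnique_fst y)
    (fun j hj y => by simpa using (hψ j hj).existsUnique_snd y)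

end TwoFactor

section Decomposition

variable {X Y : Type*}

theorem intervalDecomposition_bipartiteGraphOf {D : Set (X × Y)} {n : ℕ}
    (F : Fin n → Set (X × Y)) (hFD : ∀ j, F j ⊆ D) (hcover : ∀ e ∈ D, ∃! j, e ∈ F j)
    (hcol : ∀ j, IntervalColorable (bipartiteGraphOf (F j))) :
    IntervalDecomposition (bipartiteGraphOf D) n := by
  refine ⟨fun j => bipartiteGraphOf (F j), fun j => bipartiteGraphOf_mono (hFD j), hcol,
    fun e he => ?_⟩
  induction e using Sym2.ind with
  | h u v =>
    rcases u with x | y <;> rcases v with x' | y'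
    all_goals simp only [SimpleGraph.mem_edgeSet, bipartiteGraphOf_adj_inl_inr,
      bipartiteGraphOf_adj_inr_inl, bipartiteGraphOf_not_adj_inl_inl,
      bipartiteGraphOf_not_adj_inr_inr] at he ⊢
    all_goals exact hcover _ he

variable [Fintype X] [Fintype Y] [DecidableEq X] [DecidableEq Y]

theorem intervalDecomposition_of_factorization {D : Finset (X × Y)} {φ : X × Y → ℕ} {k r : ℕ}
    (hk : 4 ≤ k) (hφk : ∀ e ∈ D, φ e < k)
    (hφ : ∀ t < k, IsBiregular {e ∈ D | φ e = t} Prod.fst Prod.snd 1 r) :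
    IntervalDecomposition (bipartiteGraphOf (D : Set (X × Y))) (k - 2) := by
  let F (j : Fin (k - 2)) : Finset (X × Y) := {e ∈ D | φ e = j ∨ (k - 4 ≤ j ∧ φ e = j + 2)}
  refine intervalDecomposition_bipartiteGraphOf (fun j => F j)
    (fun j => coe_subset.2 (filter_subset _ D)) (fun e he => ?_) (fun j => ?_)
  · rw [mem_coe] at he
    have := hφk e he
    refine ⟨⟨if φ e < k - 2 then φ e else φ e - 2, by split_ifs <;> omega⟩, ?_, fun j hj => ?_⟩
    · simp only [F, coe_filter, Set.mem_ofPred_eq]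
      exact ⟨he, by split_ifs <;> omega⟩
    · simp only [F, coe_filter, Set.mem_ofPred_eq] at hj
      ext
      dsimp only
      split_ifs <;> omega
  show IntervalColorable (bipartiteGraphOf (F j : Set (X × Y)))
  by_cases hj : (j : ℕ) < k - 4
  · have hFj : F j = {e ∈ D | φ e = j} := filter_congr fun e _ => by omega
    rw [hFj]
    refine intervalColorable_bipartiteGraphOf_of_subsingleton fun x y hy y' hy' => ?_
    exact congrArg Prod.snd (((hφ j (by omega)).existsUnique_fst x).unique
      ⟨mem_coe.1 hy, rfl⟩ ⟨mem_coe.1 hy', rfl⟩)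
  · have hFj : F j = {e ∈ D | φ e = j} ∪ {e ∈ D | φ e = j + 2} := by
      rw [← filter_or]
      exact filter_congr fun e _ => by omega
    have hFj_biregular : IsBiregular (F j) Prod.fst Prod.snd 2 (2 * r) := by
      rw [hFj, two_mul]
      exact (hφ j (by omega)).union (hφ (j + 2) (by omega))
        (disjoint_filter.2 fun e _ h h' => by omega)
    exact hFj_biregular.intervalColorable_of_two

end Decomposition

section BipartiteDegrees

variable {X Y : Type*} [Fintype X] [Fintype Y] [DecidableEq X] [DecidableEq Y]
  (G : SimpleGraph (X ⊕ Y)) [DecidableRel G.Adj]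

theorem isBiregular_of_degree (hX : ∀ x x' : X, ¬G.Adj (.inl x) (.inl x'))
    (hY : ∀ y y' : Y, ¬G.Adj (.inr y) (.inr y')) {d d' : ℕ}
    (hdX : ∀ x, G.degree (.inl x) = d) (hdY : ∀ y, G.degree (.inr y) = d') :
    IsBiregular {e : X × Y | G.Adj (.inl e.1) (.inr e.2)} Prod.fst Prod.snd d d' := by
  constructor
  · intro x
    rw [← hdX x, ← G.card_neighborFinset_eq_degree]
    refine card_nbij (fun e => .inr e.2) (fun e he => ?_) (fun e he e' he' h => ?_) ?_
    · simp only [coe_filter, mem_filter, mem_univ, true_and, Set.mem_ofPred_eq] at he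
      simpa [← he.2] using he.1
    · simp only [coe_filter, mem_filter, mem_univ, true_and, Set.mem_ofPred_eq] at he he'
      exact Prod.ext (he.2.trans he'.2.symm) (Sum.inr_injective h)
    · rintro (x' | y) hv
      · exact (hX x x' (by simpa using hv)).elim
      · exact ⟨(x, y), by simpa using hv, rfl⟩
  · intro y
    rw [← hdY y, ← G.card_neighborFinset_eq_degree]
    refine card_nbij (fun e => .inl e.1) (fun e he => ?_) (fun e he e' he' h => ?_) ?_
    · simp only [coe_filter, mem_filter, mem_univ, true_and, Set.mem_ofPred_eq] at he
      simpa [← he.2, G.adj_comm] using he.1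
    · simp only [coe_filter, mem_filter, mem_univ, true_and, Set.mem_ofPred_eq] at he he'
      exact Prod.ext (Sum.inl_injective h) (he.2.trans he'.2.symm)
    · rintro (x | y') hv
      · exact ⟨(x, y), by simpa [G.adj_comm] using hv, rfl⟩
      · exact (hY y y' (by simpa using hv)).elim

end BipartiteDegrees

theorem biregular_k_intervalThickness_le_general
    {X Y : Type*} [Fintype X] [Fintype Y]
    (G : SimpleGraph (X ⊕ Y)) [DecidableRel G.Adj] (k r : ℕ) (hk : 4 ≤ k)
    (hX : ∀ x x' : X, ¬ G.Adj (Sum.inl x) (Sum.inl x'))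
    (hY : ∀ y y' : Y, ¬ G.Adj (Sum.inr y) (Sum.inr y'))
    (hdX : ∀ x : X, G.degree (Sum.inl x) = k)
    (hdY : ∀ y : Y, G.degree (Sum.inr y) = k * r) :
    intervalThickness G ≤ k - 2 := by
  classical
  obtain ⟨φ, hφk, hφ⟩ := (isBiregular_of_degree G hX hY hdX hdY).exists_factorization
  have hG : G = bipartiteGraphOf {e | G.Adj (.inl e.1) (.inr e.2)} := eq_bipartiteGraphOf G hX hY
  have hdecomp := intervalDecomposition_of_factorization hk hφk hφ
  simp only [coe_filter, mem_univ, true_and] at hdecomp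
  exact hG ▸ Nat.sInf_le hdecomp

theorem biregular_k_intervalThickness_le
    {X Y : Type*} [Fintype X] [Fintype Y] [DecidableEq X] [DecidableEq Y]
    (G : SimpleGraph (X ⊕ Y)) [DecidableRel G.Adj] (k r : ℕ) (hk : 4 ≤ k) (hr : 2 ≤ r)
    (hX : ∀ x x' : X, ¬ G.Adj (Sum.inl x) (Sum.inl x'))
    (hY : ∀ y y' : Y, ¬ G.Adj (Sum.inr y) (Sum.inr y'))
    (hdX : ∀ x : X, G.degree (Sum.inl x) = k)
    (hdY : ∀ y : Y, G.degree (Sum.inr y) = k * r) :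
    intervalThickness G ≤ k - 2 :=
  biregular_k_intervalThickness_le_general G k r hk hX hY hdX hdY
end

section
/- For every n ≥ 1, the complete graph K_{2n+1} satisfies θ_int(K_{2n+1}) = 2, while its arboricity satisfies γ(K_{2n+1}) ≥ n + 1; hence γ(K_{2n+1}) − θ_int(K_{2n+1}) ≥ n − 1. -/
open SimpleGraph

variable {V : Type*}

/-- The arboricity: least number of edge-disjoint forests decomposing `G`. -/
noncomputable def arboricity (G : SimpleGraph V) : ℕ :=
  sInf {k | ∃ F : Fin k → SimpleGraph V, (∀ i, F i ≤ G) ∧ (∀ i, (F i).IsAcyclic) ∧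
    ∀ e ∈ G.edgeSet, ∃! i, e ∈ (F i).edgeSet}

/-!
`K_{2n+1}` is the edge-disjoint union of the star at its last vertex, colored by the index of
the leaf, and a `K_{2n}` on the other vertices with its round-robin `(2n-1)`-edge-coloring; as
every vertex of that `K_{2n}` has degree `2n-1`, it sees all the colors `1, …, 2n-1`. Conversely,
in an interval coloring of a complete graph the largest of the minimal colors at the vertices
occurs at every vertex, so its color class is a perfect matching and the number of vertices is
even. For the arboricity: a forest on `2n+1` vertices has at most `2n` edges, and `K_{2n+1}` has
`n(2n+1) > n · 2n` of them.
-/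

open Finset

section IntervalColoring

variable {G : SimpleGraph V} {c : Sym2 V → ℕ}

lemma isProperEdgeColoring_iff :
    IsProperEdgeColoring G c ↔
      ∀ v w₁ w₂, G.Adj v w₁ → G.Adj v w₂ → c s(v, w₁) = c s(v, w₂) → w₁ = w₂ := by
  constructor
  · intro hc v w₁ w₂ h₁ h₂ hcol
    by_contra hne
    exact hc _ h₁ _ h₂ (fun h ↦ hne (Sym2.congr_right.mp h))
      ⟨v, Sym2.mem_mk_left _ _, Sym2.mem_mk_left _ _⟩ hcol
  · rintro hc e₁ he₁ e₂ he₂ hne ⟨v, hv₁, hv₂⟩ hcol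
    obtain ⟨w₁, rfl⟩ := Sym2.mem_iff_exists.mp hv₁
    obtain ⟨w₂, rfl⟩ := Sym2.mem_iff_exists.mp hv₂
    exact hne (congrArg _ (hc v w₁ w₂ he₁ he₂ hcol))

lemma mem_colorsAt {v : V} {k : ℕ} : k ∈ colorsAt G c v ↔ ∃ w, G.Adj v w ∧ c s(v, w) = k := by
  constructor
  · rintro ⟨e, he, hv, rfl⟩
    obtain ⟨w, rfl⟩ := Sym2.mem_iff_exists.mp hv
    exact ⟨w, he, rfl⟩
  · rintro ⟨w, hw, rfl⟩
    exact ⟨s(v, w), hw, Sym2.mem_mk_left _ _, rfl⟩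

/-- A proper coloring puts `G.degree v` distinct colors at `v`, so they fill the window. -/
lemma isIntervalColoring_of_forall_mem_Ico [Fintype V] [DecidableRel G.Adj]
    (hc : IsProperEdgeColoring G c) (hpos : ∀ e ∈ G.edgeSet, 1 ≤ c e)
    (hwindow : ∀ v, ∃ a, ∀ w, G.Adj v w → c s(v, w) ∈ Ico a (a + G.degree v)) :
    IsIntervalColoring G c := by
  refine ⟨hc, hpos, fun v ↦ ?_⟩
  obtain ⟨a, ha⟩ := hwindow v
  have hfull : (G.neighborFinset v).image (fun w ↦ c s(v, w)) = Ico a (a + G.degree v) := by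
    refine eq_of_subset_of_card_le (fun k hk ↦ ?_) ?_
    · obtain ⟨w, hw, rfl⟩ := mem_image.mp hk
      exact ha w ((mem_neighborFinset _ _ _).mp hw)
    · rw [card_image_of_injOn, Nat.card_Ico, Nat.add_sub_cancel_left, card_neighborFinset_eq_degree]
      intro w₁ hw₁ w₂ hw₂ hcol
      exact isProperEdgeColoring_iff.mp hc v w₁ w₂ (by simpa using hw₁) (by simpa using hw₂) hcol
  have hcolors : ∀ k, k ∈ colorsAt G c v ↔ a ≤ k ∧ k < a + G.degree v := by
    intro k
    rw [← mem_Ico, ← hfull, mem_colorsAt]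
    simp
  intro x hx y hy k hxk hky
  rw [hcolors] at hx hy ⊢
  omega

end IntervalColoring

section OddComplete

variable {G : SimpleGraph V} {c : Sym2 V → ℕ}

/-- The color class of `K` is a perfect matching. -/
lemma even_card_of_forall_mem_colorsAt [Fintype V] (hc : IsProperEdgeColoring G c) {K : ℕ}
    (hK : ∀ v, K ∈ colorsAt G c v) : Even (Fintype.card V) := by
  let M : G.Subgraph :=
    { verts := Set.univ
      Adj := fun a b ↦ G.Adj a b ∧ c s(a, b) = K
      adj_sub := And.left
      edge_vert := fun _ ↦ Set.mem_univ _
      symm := ⟨fun a b h ↦ ⟨h.1.symm, by rw [Sym2.eq_swap]; exact h.2⟩⟩ }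
  have hM : M.IsPerfectMatching := by
    refine Subgraph.isPerfectMatching_iff.mpr fun v ↦ ?_
    obtain ⟨w, hw⟩ := mem_colorsAt.mp (hK v)
    exact ⟨w, hw, fun u hu ↦ isProperEdgeColoring_iff.mp hc v u w hu.1 hw.1 (hu.2.trans hw.2.symm)⟩
  exact hM.even_card

/-- The witness is the largest of the minimal colors at the vertices. -/
lemma exists_forall_mem_colorsAt_top [Fintype V] [Nontrivial V]
    (hc : IsIntervalColoring (⊤ : SimpleGraph V) c) : ∃ K, ∀ v, K ∈ colorsAt ⊤ c v := by
  have hne : ∀ v : V, (colorsAt ⊤ c v).Nonempty := fun v ↦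
    let ⟨w, hw⟩ := exists_ne v
    ⟨_, mem_colorsAt.mpr ⟨w, hw.symm, rfl⟩⟩
  let minColor : V → ℕ := fun v ↦ sInf (colorsAt ⊤ c v)
  obtain ⟨v₀, -, hv₀⟩ := exists_max_image univ minColor univ_nonempty
  refine ⟨minColor v₀, fun v ↦ ?_⟩
  rcases eq_or_ne v v₀ with rfl | hv
  · exact Nat.sInf_mem (hne v)
  · have hcv : c s(v, v₀) ∈ colorsAt ⊤ c v := mem_colorsAt.mpr ⟨v₀, hv, rfl⟩
    have hcv₀ : c s(v, v₀) ∈ colorsAt ⊤ c v₀ :=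
      mem_colorsAt.mpr ⟨v, hv.symm, by rw [Sym2.eq_swap]⟩
    exact hc.2.2 v _ (Nat.sInf_mem (hne v)) _ hcv _ (hv₀ v (mem_univ v)) (Nat.sInf_le hcv₀)

lemma even_card_of_intervalColorable_top [Fintype V] [Nontrivial V]
    (h : IntervalColorable (⊤ : SimpleGraph V)) : Even (Fintype.card V) := by
  obtain ⟨c, hc⟩ := h
  obtain ⟨K, hK⟩ := exists_forall_mem_colorsAt_top hc
  exact even_card_of_forall_mem_colorsAt hc.1 hK

end OddComplete

section Thickness

variable {G : SimpleGraph V}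

lemma intervalColorable_of_edgeSet_eq_empty (h : G.edgeSet = ∅) : IntervalColorable G :=
  ⟨0, fun _ he ↦ by simp [h] at he, fun _ he ↦ by simp [h] at he,
    fun _ _ ⟨_, he, _⟩ ↦ by simp [h] at he⟩

lemma IntervalDecomposition.intervalColorable {k : ℕ} (hk : k ≤ 1) (h : IntervalDecomposition G k) :
    IntervalColorable G := by
  obtain ⟨H, hle, hH, hcover⟩ := h
  interval_cases k
  · refine intervalColorable_of_edgeSet_eq_empty (Set.eq_empty_of_forall_notMem fun e he ↦ ?_)
    exact (hcover e he).exists.choose.elim0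
  · have hG : H 0 = G := by
      refine le_antisymm (hle 0) fun a b hab ↦ ?_
      obtain ⟨i, hi, -⟩ := hcover s(a, b) hab
      rwa [Subsingleton.elim i 0] at hi
    exact hG ▸ hH 0

lemma intervalDecomposition_sup {H₀ H₁ : SimpleGraph V} (hdisj : Disjoint H₀ H₁)
    (h₀ : IntervalColorable H₀) (h₁ : IntervalColorable H₁) :
    IntervalDecomposition (H₀ ⊔ H₁) 2 := by
  refine ⟨![H₀, H₁], Fin.forall_fin_two.mpr ⟨le_sup_left, le_sup_right⟩,
    Fin.forall_fin_two.mpr ⟨h₀, h₁⟩, fun e he ↦ ?_⟩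
  have hdisj' := Set.disjoint_left.mp (disjoint_edgeSet.mpr hdisj)
  rcases (edgeSet_sup H₀ H₁ ▸ he : e ∈ H₀.edgeSet ∪ H₁.edgeSet) with he₀ | he₁
  · exact ⟨0, he₀, Fin.forall_fin_two.mpr ⟨fun _ ↦ rfl, fun h ↦ (hdisj' he₀ h).elim⟩⟩
  · exact ⟨1, he₁, Fin.forall_fin_two.mpr ⟨fun h ↦ (hdisj' h he₁).elim, fun _ ↦ rfl⟩⟩

lemma intervalThickness_eq_two (h : IntervalDecomposition G 2) (hG : ¬ IntervalColorable G) :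
    intervalThickness G = 2 :=
  le_antisymm (Nat.sInf_le h) <| le_csInf ⟨2, h⟩ fun _ hk ↦
    not_lt.mp fun hlt ↦ hG (hk.intervalColorable (Nat.lt_succ_iff.mp hlt))

end Thickness

section Construction

/-- For odd `m`, a proper `m`-edge-coloring of the complete graph on `{0, …, m}`: two vertices
`a, b < m` get `(a + b) % m + 1`, which misses exactly the color `2 * a % m + 1` at `a`, and the
extra vertex `m` is joined to each `a` by that missing color. -/
def roundRobin (m a b : ℕ) : ℕ :=
  if a = m then 2 * b % m + 1 else if b = m then 2 * a % m + 1 else (a + b) % m + 1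

lemma roundRobin_comm (m a b : ℕ) : roundRobin m a b = roundRobin m b a := by
  unfold roundRobin
  split_ifs <;> subst_vars <;> simp [Nat.add_comm]

lemma roundRobin_inj {m v w₁ w₂ : ℕ} (hm : Odd m) (hv : v ≤ m) (h₁ : w₁ ≤ m) (h₂ : w₂ ≤ m)
    (hv₁ : w₁ ≠ v) (hv₂ : w₂ ≠ v) (h : roundRobin m v w₁ = roundRobin m v w₂) : w₁ = w₂ := by
  unfold roundRobin at h
  by_cases hvm : v = m
  · simp only [if_pos hvm, Nat.add_right_cancel_iff] at h
    have hcop : Nat.Coprime m 2 := Nat.coprime_two_right.mpr hm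
    exact (Nat.ModEq.cancel_left_of_coprime hcop h).eq_of_lt_of_lt (by omega) (by omega)
  · have cancel : ∀ x y, x < m → y < m → (v + x) % m = (v + y) % m → x = y :=
      fun x y hx hy hxy ↦ (Nat.ModEq.add_left_cancel' v hxy).eq_of_lt_of_lt hx hy
    simp only [if_neg hvm] at h
    split_ifs at h with hw₁ hw₂ hw₂
    · omega
    · have := cancel v w₂ (by omega) (by omega) (by rw [two_mul] at h; omega)
      omega
    · have := cancel w₁ v (by omega) (by omega) (by rw [two_mul] at h; omega)
      omega
    · exact cancel w₁ w₂ (by omega) (by omega) (by omega)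

lemma roundRobin_mem_Ico {m : ℕ} (hm : 0 < m) (a b : ℕ) : roundRobin m a b ∈ Ico 1 (1 + m) := by
  have hmod : ∀ x, x % m + 1 ∈ Ico 1 (1 + m) := fun x ↦
    mem_Ico.mpr ⟨by omega, by have := Nat.mod_lt x hm; omega⟩
  unfold roundRobin
  split_ifs <;> apply hmod

lemma intervalColorable_starGraph_last (N : ℕ) : IntervalColorable (starGraph (Fin.last N)) := by
  refine ⟨Sym2.lift ⟨fun a b ↦ min (a : ℕ) b + 1, fun a b ↦ by simp only [min_comm]⟩,
    isIntervalColoring_of_forall_mem_Ico ?_ ?_ fun v ↦ ?_⟩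
  · rw [isProperEdgeColoring_iff]
    intro v w₁ w₂ h₁ h₂ hcol
    simp only [starGraph_adj, Sym2.lift_mk] at h₁ h₂ hcol
    rcases eq_or_ne v (Fin.last N) with rfl | hv
    · simp only [Fin.val_last] at hcol
      exact Fin.ext (by omega)
    · rw [h₁.2.resolve_left hv, h₂.2.resolve_left hv]
  · intro e _
    induction e using Sym2.ind
    simp
  · rcases eq_or_ne v (Fin.last N) with rfl | hv
    · refine ⟨1, fun w hw ↦ ?_⟩
      have := Fin.val_lt_last (starGraph_adj_center_iff.mp hw).symm
      simp only [degree_starGraph_center, Fintype.card_fin, Sym2.lift_mk, mem_Ico, Fin.val_last]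
      omega
    · refine ⟨v + 1, fun w hw ↦ ?_⟩
      obtain rfl : w = Fin.last N := ((starGraph_adj.mp hw).2.resolve_left hv)
      simp only [degree_starGraph_of_ne_center hv, Sym2.lift_mk, mem_Ico, Fin.val_last]
      omega

lemma intervalColorable_compl_starGraph_last (n : ℕ) :
    IntervalColorable (starGraph (Fin.last (2 * n)))ᶜ := by
  have adj : ∀ v w : Fin (2 * n + 1), (starGraph (Fin.last (2 * n)))ᶜ.Adj v w ↔
      v.val ≠ w.val ∧ v.val < 2 * n ∧ w.val < 2 * n := by
    intro v w
    simp only [compl_adj, starGraph_adj, Fin.ext_iff, Fin.val_last]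
    omega
  refine ⟨Sym2.lift ⟨fun a b ↦ roundRobin (2 * n - 1) a b, fun a b ↦ roundRobin_comm ..⟩,
    isIntervalColoring_of_forall_mem_Ico ?_ ?_ fun v ↦ ⟨1, fun w hw ↦ ?_⟩⟩
  · rw [isProperEdgeColoring_iff]
    intro v w₁ w₂ h₁ h₂ hcol
    rw [adj] at h₁ h₂
    exact Fin.ext <| roundRobin_inj ⟨n - 1, by omega⟩ (by omega) (by omega) (by omega)
      (Ne.symm h₁.1) (Ne.symm h₂.1) hcol
  · refine Sym2.ind fun a b hab ↦ ?_
    have := ((adj a b).mp hab).2.1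
    exact (mem_Ico.mp (roundRobin_mem_Ico (by omega) a b)).1
  · have hv : v ≠ Fin.last (2 * n) := fun h ↦ by simp [adj, h] at hw
    have := ((adj v w).mp hw).2.1
    rw [degree_compl, degree_starGraph_of_ne_center hv, Fintype.card_fin, Sym2.lift_mk,
      show 2 * n + 1 - 1 - 1 = 2 * n - 1 by omega]
    exact roundRobin_mem_Ico (by omega) v w

end Construction

section Arboricity

lemma SimpleGraph.IsAcyclic.card_edgeFinset_le [Fintype V] [Nonempty V] {F : SimpleGraph V}
    [Fintype F.edgeSet] (hF : F.IsAcyclic) : #F.edgeFinset ≤ Fintype.card V - 1 := by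
  classical
  obtain ⟨T, hFT, -, hT⟩ := connected_top.exists_isTree_le_of_le_of_isAcyclic le_top hF
  have hcard := hT.card_edgeFinset
  have hle : #F.edgeFinset ≤ #T.edgeFinset := card_le_card (edgeFinset_mono hFT)
  omega

lemma card_edgeFinset_le_mul_of_forest_cover [Fintype V] [Nonempty V] {G : SimpleGraph V}
    [DecidableRel G.Adj] {k : ℕ} (F : Fin k → SimpleGraph V) (hF : ∀ i, (F i).IsAcyclic)
    (hcover : ∀ e ∈ G.edgeSet, ∃ i, e ∈ (F i).edgeSet) :
    #G.edgeFinset ≤ k * (Fintype.card V - 1) := by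
  classical
  have hsub : G.edgeFinset ⊆ univ.biUnion fun i ↦ (F i).edgeFinset := fun e he ↦ by
    obtain ⟨i, hi⟩ := hcover e (mem_edgeFinset.mp he)
    exact mem_biUnion.mpr ⟨i, mem_univ _, mem_edgeFinset.mpr hi⟩
  calc #G.edgeFinset ≤ ∑ i, #(F i).edgeFinset := (card_le_card hsub).trans card_biUnion_le
    _ ≤ ∑ _i : Fin k, (Fintype.card V - 1) := sum_le_sum fun i _ ↦ (hF i).card_edgeFinset_le
    _ = k * (Fintype.card V - 1) := by simp

/-- The forests are the stars joining each `i` to the larger vertices. -/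
lemma exists_forest_decomposition {N : ℕ} (G : SimpleGraph (Fin N)) :
    ∃ F : Fin N → SimpleGraph (Fin N), (∀ i, F i ≤ G) ∧ (∀ i, (F i).IsAcyclic) ∧
      ∀ e ∈ G.edgeSet, ∃! i, e ∈ (F i).edgeSet := by
  refine ⟨fun i ↦ G ⊓ fromRel fun a b ↦ a = i ∧ a < b, fun i ↦ inf_le_left,
    fun i ↦ (isAcyclic_starGraph i).anti fun a b h ↦ ?_, Sym2.ind fun a b hab ↦ ?_⟩
  · simp only [inf_adj, fromRel_adj] at h
    rw [starGraph_adj]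
    tauto
  · have hne : a ≠ b := hab.ne
    refine ⟨min a b, ⟨hab, ?_⟩, fun j hj ↦ ?_⟩
    · simp only [fromRel_adj, ne_eq, Fin.ext_iff, Fin.lt_def, Fin.coe_min] at hne ⊢
      omega
    · simp only [mem_edgeSet, inf_adj, fromRel_adj, ne_eq, Fin.ext_iff, Fin.lt_def,
        Fin.coe_min] at hne hj ⊢
      omega

lemma card_edgeFinset_le_arboricity_mul {N : ℕ} (G : SimpleGraph (Fin (N + 1)))
    [DecidableRel G.Adj] : #G.edgeFinset ≤ arboricity G * N := by
  obtain ⟨F, -, hF, hcover⟩ : arboricity G ∈ _ :=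
    Nat.sInf_mem ⟨N + 1, exists_forest_decomposition G⟩
  simpa using card_edgeFinset_le_mul_of_forest_cover F hF fun e he ↦ (hcover e he).exists

end Arboricity

theorem complete_odd_thickness_and_arboricity (n : ℕ) (hn : 1 ≤ n) :
    intervalThickness (⊤ : SimpleGraph (Fin (2 * n + 1))) = 2 ∧
      n + 1 ≤ arboricity (⊤ : SimpleGraph (Fin (2 * n + 1))) ∧
      n - 1 ≤ arboricity (⊤ : SimpleGraph (Fin (2 * n + 1))) -
        intervalThickness (⊤ : SimpleGraph (Fin (2 * n + 1))) := by
  have hthickness : intervalThickness (⊤ : SimpleGraph (Fin (2 * n + 1))) = 2 := by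
    refine intervalThickness_eq_two ?_ fun h ↦ ?_
    · rw [← sup_compl_eq_top (x := starGraph (Fin.last (2 * n)))]
      exact intervalDecomposition_sup disjoint_compl_right (intervalColorable_starGraph_last _)
        (intervalColorable_compl_starGraph_last n)
    · have : Nontrivial (Fin (2 * n + 1)) := Fin.nontrivial_iff_two_le.mpr (by omega)
      have heven := even_card_of_intervalColorable_top h
      rw [Fintype.card_fin, Nat.even_add_one] at heven
      exact heven (even_two_mul n)
  have harboricity : n + 1 ≤ arboricity (⊤ : SimpleGraph (Fin (2 * n + 1))) := by
    have hedges := card_edgeFinset_le_arboricity_mul (⊤ : SimpleGraph (Fin (2 * n + 1)))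
    rw [card_edgeFinset_top_eq_card_choose_two, Fintype.card_fin, Nat.choose_two_right,
      Nat.add_sub_cancel, show (2 * n + 1) * (2 * n) = n * (2 * n + 1) * 2 by ring,
      Nat.mul_div_cancel _ two_pos] at hedges
    nlinarith
  exact ⟨hthickness, harboricity, by omega⟩
end

section
/- If a graph G admits a cyclic interval t-coloring with t ≥ 2Δ(G) − 2, then θ_int(G) ≤ 2. -/
open SimpleGraph

variable {V : Type*}

/-- A set of colors is a cyclic interval modulo `t`: the colors (taken in `{1,…,t}`)
are consecutive in the cyclic order in which color `1` follows color `t`. -/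
def IsCyclicInterval (t : ℕ) (S : Set ℕ) : Prop :=
  ∃ a l : ℕ, S = (fun j => (a + j) % t + 1) '' {j | j < l}

/-!
Split the colors at `Δ = G.maxDegree` into the low range `[1, Δ - 1]` and the high range
`[Δ, t]`, and keep the coloring on each of the two spanning subgraphs. At a vertex the colors
form a cyclic interval of at most `Δ` colors; such a cyclic interval can only wrap around from
`t` to `1` between two of its colors whose difference exceeds `t - Δ`. Both ranges are shorter
than that once `t ≥ 2Δ - 2`, so in each subgraph the colors at every vertex form an ordinary
interval.
-/

lemma add_add_mod_add_one_of_le {a i t x d : ℕ} (hx : (a + i) % t + 1 = x) (hd : x + d ≤ t) :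
    (a + (i + d)) % t + 1 = x + d := by
  rw [← add_assoc, ← Nat.mod_add_mod, Nat.mod_eq_of_lt (by omega)]
  omega

lemma ncard_image_add_mod {a l t : ℕ} (hl : l ≤ t) :
    ((fun j => (a + j) % t + 1) '' {j | j < l}).ncard = l := by
  have hinj : Set.InjOn (fun j => (a + j) % t + 1) {j | j < l} := by
    intro i (hi : i < l) j (hj : j < l) hij
    have hmod : i ≡ j [MOD t] := Nat.ModEq.add_left_cancel' a (Nat.add_right_cancel hij)
    exact Nat.ModEq.eq_of_lt_of_lt hmod (by omega) (by omega)
  rw [hinj.ncard_image]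
  change (Set.Iio l).ncard = l
  rw [← Finset.coe_range, Set.ncard_coe_finset, Finset.card_range]

namespace IsCyclicInterval

variable {t : ℕ} {S : Set ℕ}

lemma exists_eq_image_ncard (hS : IsCyclicInterval t S) (ht : 0 < t) :
    ∃ a, S = (fun j => (a + j) % t + 1) '' {j | j < S.ncard} := by
  obtain ⟨a, l, rfl⟩ := hS
  have hmin : (fun j => (a + j) % t + 1) '' {j | j < l} =
      (fun j => (a + j) % t + 1) '' {j | j < min l t} := by
    ext n
    constructor
    · rintro ⟨j, hj, rfl⟩
      exact ⟨j % t, lt_min ((Nat.mod_le j t).trans_lt hj) (Nat.mod_lt j ht),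
        by simp only [Nat.add_mod_mod]⟩
    · rintro ⟨j, hj, rfl⟩
      exact ⟨j, lt_of_lt_of_le hj (min_le_left l t), rfl⟩
  rw [hmin, ncard_image_add_mod (min_le_right l t)]
  exact ⟨a, rfl⟩

lemma mem_of_le_of_le (hS : IsCyclicInterval t S) {x y k : ℕ} (hx : x ∈ S) (hy : y ∈ S)
    (hxk : x ≤ k) (hky : k ≤ y) (hclose : y + S.ncard ≤ x + t) : k ∈ S := by
  rcases Nat.eq_zero_or_pos t with rfl | ht
  · obtain rfl : k = x := by omega
    exact hx
  obtain ⟨a, hS⟩ := hS.exists_eq_image_ncard ht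
  rw [hS] at hx hy ⊢
  obtain ⟨i, hi : i < S.ncard, hix : (a + i) % t + 1 = x⟩ := hx
  obtain ⟨j, hj : j < S.ncard, hjy : (a + j) % t + 1 = y⟩ := hy
  have hyt : y ≤ t := hjy ▸ Nat.mod_lt _ ht
  -- Walking `y - x` steps from color `x` does not wrap, so it reaches `y` at index `j`.
  have hj_eq : i + (y - x) = j := by
    have hiy := add_add_mod_add_one_of_le (d := y - x) hix (by omega)
    have hmod : a + (i + (y - x)) ≡ a + j [MOD t] := by unfold Nat.ModEq; omega
    exact Nat.ModEq.eq_of_lt_of_lt (Nat.ModEq.add_left_cancel' a hmod) (by omega) (by omega)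
  refine ⟨i + (k - x), show i + (k - x) < S.ncard by omega, ?_⟩
  show (a + (i + (k - x))) % t + 1 = k
  rw [add_add_mod_add_one_of_le hix (by omega)]
  omega

lemma ordConnected_inter (hS : IsCyclicInterval t S) {I : Set ℕ} (hI : I.OrdConnected)
    (hclose : ∀ x ∈ S ∩ I, ∀ y ∈ S ∩ I, y + S.ncard ≤ x + t) : (S ∩ I).OrdConnected :=
  ⟨fun _ hx _ hy _ hk => ⟨hS.mem_of_le_of_le hx.1 hy.1 hk.1 hk.2 (hclose _ hx _ hy),
    hI.out hx.2 hy.2 hk⟩⟩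

end IsCyclicInterval

lemma colorsAt_eq_image_incidenceSet (G : SimpleGraph V) (c : Sym2 V → ℕ) (v : V) :
    colorsAt G c v = c '' G.incidenceSet v := by
  ext n
  simp only [colorsAt, incidenceSet, Set.mem_image, Set.mem_ofPred_eq, and_assoc]

lemma ncard_colorsAt_le_maxDegree [Fintype V] (G : SimpleGraph V) [DecidableRel G.Adj]
    (c : Sym2 V → ℕ) (v : V) : (colorsAt G c v).ncard ≤ G.maxDegree := by
  classical
  calc (colorsAt G c v).ncard
      ≤ (G.incidenceSet v).ncard := by
        rw [colorsAt_eq_image_incidenceSet]; exact Set.ncard_image_le (Set.toFinite _)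
    _ = G.degree v := by rw [Set.ncard_eq_toFinset_card', ← card_incidenceSet_eq_degree,
        Set.toFinset_card]
    _ ≤ G.maxDegree := G.degree_le_maxDegree v

lemma colorsAt_deleteEdges_preimage_compl (G : SimpleGraph V) (c : Sym2 V → ℕ) (T : Set ℕ)
    (v : V) : colorsAt (G.deleteEdges (c ⁻¹' Tᶜ)) c v = colorsAt G c v ∩ T := by
  ext n
  simp only [colorsAt, edgeSet_deleteEdges, Set.mem_sdiff, Set.mem_preimage, Set.mem_compl_iff,
    not_not, Set.mem_inter_iff, Set.mem_ofPred_eq]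
  constructor
  · rintro ⟨e, ⟨he, heT⟩, hv, rfl⟩
    exact ⟨⟨e, he, hv, rfl⟩, heT⟩
  · rintro ⟨⟨e, he, hv, rfl⟩, heT⟩
    exact ⟨e, ⟨he, heT⟩, hv, rfl⟩

variable {G H : SimpleGraph V} {c : Sym2 V → ℕ}

lemma IsProperEdgeColoring.anti (hGH : H ≤ G) (hc : IsProperEdgeColoring G c) :
    IsProperEdgeColoring H c :=
  fun e₁ he₁ e₂ he₂ => hc e₁ (edgeSet_mono hGH he₁) e₂ (edgeSet_mono hGH he₂)

lemma isIntervalColoring_deleteEdges_preimage_compl {T : Set ℕ}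
    (hc : IsProperEdgeColoring G c) (hpos : ∀ e ∈ G.edgeSet, 1 ≤ c e)
    (hT : ∀ v, (colorsAt G c v ∩ T).OrdConnected) :
    IsIntervalColoring (G.deleteEdges (c ⁻¹' Tᶜ)) c := by
  refine ⟨hc.anti (deleteEdges_le _), fun e he => hpos e (edgeSet_mono (deleteEdges_le _) he),
    fun v a ha b hb k hak hkb => ?_⟩
  rw [colorsAt_deleteEdges_preimage_compl] at ha hb ⊢
  exact (hT v).out ha hb ⟨hak, hkb⟩

lemma intervalDecomposition_two_of_deleteEdges (s : Set (Sym2 V))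
    (h₁ : IntervalColorable (G.deleteEdges s)) (h₂ : IntervalColorable (G.deleteEdges sᶜ)) :
    IntervalDecomposition G 2 := by
  refine ⟨![G.deleteEdges s, G.deleteEdges sᶜ], fun i => ?_, fun i => ?_, fun e he => ?_⟩
  · fin_cases i <;> exact deleteEdges_le _
  · fin_cases i
    exacts [h₁, h₂]
  · by_cases hs : e ∈ s
    · refine ⟨1, by simp [he, hs], fun i hi => ?_⟩
      fin_cases i
      · simp [hs] at hi
      · rfl
    · refine ⟨0, by simp [he, hs], fun i hi => ?_⟩
      fin_cases i
      · rfl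
      · simp [hs] at hi

theorem intervalThickness_le_two_of_cyclic_interval_coloring_general [Fintype V]
    (G : SimpleGraph V) [DecidableRel G.Adj] (t : ℕ) (ht : 2 * G.maxDegree - 2 ≤ t)
    (h : ∃ c, IsProperEdgeColoring G c ∧ (∀ e ∈ G.edgeSet, c e ∈ Finset.Icc 1 t) ∧
      ∀ v, IsCyclicInterval t (colorsAt G c v)) :
    intervalThickness G ≤ 2 := by
  obtain ⟨c, hc, hrange, hcyc⟩ := h
  set Δ := G.maxDegree
  have hcolor : ∀ v, ∀ x ∈ colorsAt G c v, 1 ≤ x ∧ x ≤ t := by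
    rintro v _ ⟨e, he, -, rfl⟩
    exact Finset.mem_Icc.mp (hrange e he)
  have hsplit : ∀ T : Set ℕ, T.OrdConnected →
      (∀ x ∈ T, ∀ y ∈ T, 1 ≤ x → y ≤ t → y + Δ ≤ x + t) →
      IntervalColorable (G.deleteEdges (c ⁻¹' Tᶜ)) := by
    refine fun T hT hwidth => ⟨c, isIntervalColoring_deleteEdges_preimage_compl hc
      (fun e he => (Finset.mem_Icc.mp (hrange e he)).1) fun v => ?_⟩
    refine (hcyc v).ordConnected_inter hT fun x hx y hy => ?_
    have := hwidth x hx.2 y hy.2 (hcolor v x hx.1).1 (hcolor v y hy.1).2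
    have := ncard_colorsAt_le_maxDegree G c v
    omega
  have hlow := hsplit (Set.Iio Δ) Set.ordConnected_Iio fun x hx y hy _ _ => by
    simp only [Set.mem_Iio] at hx hy; omega
  have hhigh := hsplit (Set.Ici Δ) Set.ordConnected_Ici fun x hx y _ _ _ => by
    simp only [Set.mem_Ici] at hx; omega
  rw [Set.compl_Iio] at hlow
  rw [Set.preimage_compl] at hhigh
  exact Nat.sInf_le (intervalDecomposition_two_of_deleteEdges _ hlow hhigh)

theorem intervalThickness_le_two_of_cyclic_interval_coloring [Fintype V] [DecidableEq V]
    (G : SimpleGraph V) [DecidableRel G.Adj] (t : ℕ) (ht : 2 * G.maxDegree - 2 ≤ t)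
    (h : ∃ c, IsProperEdgeColoring G c ∧ (∀ e ∈ G.edgeSet, c e ∈ Finset.Icc 1 t) ∧
      ∀ v, IsCyclicInterval t (colorsAt G c v)) :
    intervalThickness G ≤ 2 :=
  intervalThickness_le_two_of_cyclic_interval_coloring_general G t ht h
end
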